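/- arXiv:1811.02139 — 2 statements merged into one kernel-verified Lean document; each statement's English description precedes it below -/
import Mathlib

section
/- Let T be a complete first-order theory in a countable language L, U a monster model of T (κ-saturated and strongly κ-homogeneous for a sufficiently large cardinal κ), M an elementary substructure of U with |M| < κ, and φ(x;y) a partitioned L-formula that is NIP. Then conv(𝔽_M^φ), viewed as a subset of ℝ^{S_y(M)}, is sequentially dependent. -/
open FirstOrder Cardinal Set Filter Topology

/-! ### Monster model hypotheses -/

/-- `U` is `κ`-saturated: every set of formulas in finitely many object variables with
parameters from a set of size `< κ` which is finitely satisfiable in `U` is realized in `U`. -/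
def IsSaturated (L : FirstOrder.Language.{0, 0}) (U : Type) [L.Structure U]
    (κ : Cardinal.{0}) : Prop :=
  ∀ (ι : Type), #ι < κ → ∀ (c : ι → U) (n : ℕ) (S : Set (L.Formula (Fin n ⊕ ι))),
    (∀ s : Finset (L.Formula (Fin n ⊕ ι)), ↑s ⊆ S →
      ∃ a : Fin n → U, ∀ ψ ∈ s, ψ.Realize (Sum.elim a c)) →
    ∃ a : Fin n → U, ∀ ψ ∈ S, ψ.Realize (Sum.elim a c)

/-- `U` is strongly `κ`-homogeneous: any two tuples of length `< κ` with the same type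
are conjugate under an automorphism of `U`. -/
def IsStronglyHomogeneous (L : FirstOrder.Language.{0, 0}) (U : Type) [L.Structure U]
    (κ : Cardinal.{0}) : Prop :=
  ∀ (ι : Type), #ι < κ → ∀ a b : ι → U,
    (∀ ψ : L.Formula ι, ψ.Realize a ↔ ψ.Realize b) →
    ∃ σ : U ≃[L] U, ∀ i, σ (a i) = b i

variable {L : FirstOrder.Language.{0, 0}}

/-! ### NIP formulas -/

/-- The partitioned formula `φ(x;y)` has IP in `U`. -/
def FormulaHasIP (U : Type) [L.Structure U] {nx ny : ℕ}
    (φ : L.Formula (Fin nx ⊕ Fin ny)) : Prop :=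
  ∀ n : ℕ, ∃ A : Finset (Fin nx → U), n ≤ A.card ∧
    ∀ K ⊆ A, ∃ bK : Fin ny → U, ∀ c ∈ A, (φ.Realize (Sum.elim c bK) ↔ c ∈ K)

/-- The partitioned formula `φ(x;y)` is NIP in `U`. -/
def FormulaIsNIP (U : Type) [L.Structure U] {nx ny : ℕ}
    (φ : L.Formula (Fin nx ⊕ Fin ny)) : Prop :=
  ¬ FormulaHasIP U φ

/-! ### `φ`-definable sets and local Keisler measures -/

/-- The instance `φ(x;b)` of `φ(x;y)`, as a subset of `U^x`. -/
def phiSet {U : Type} [L.Structure U] {nx ny : ℕ}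
    (φ : L.Formula (Fin nx ⊕ Fin ny)) (b : Fin ny → U) : Set (Fin nx → U) :=
  { a | φ.Realize (Sum.elim a b) }

/-- The Boolean algebra `Def_φ(U)` of subsets of `U^x` generated by the instances
`φ(x;b)`, `b ∈ U^y`. -/
inductive InPhiAlg {U : Type} [L.Structure U] {nx ny : ℕ}
    (φ : L.Formula (Fin nx ⊕ Fin ny)) : Set (Fin nx → U) → Prop
  | basic (b : Fin ny → U) : InPhiAlg φ (phiSet φ b)
  | empty : InPhiAlg φ ∅
  | compl {s : Set (Fin nx → U)} : InPhiAlg φ s → InPhiAlg φ sᶜ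
  | union {s t : Set (Fin nx → U)} : InPhiAlg φ s → InPhiAlg φ t → InPhiAlg φ (s ∪ t)

/-- A finitely additive probability measure on `Def_φ(U)`, i.e. an element of `𝔐_φ(U)`. -/
structure KeislerMeasure (U : Type) [L.Structure U] {nx ny : ℕ}
    (φ : L.Formula (Fin nx ⊕ Fin ny)) where
  toFun : Set (Fin nx → U) → ℝ
  nonneg : ∀ s, InPhiAlg φ s → 0 ≤ toFun s
  total : toFun Set.univ = 1
  additive : ∀ s t, InPhiAlg φ s → InPhiAlg φ t → Disjoint s t →
    toFun (s ∪ t) = toFun s + toFun t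

/-! ### Types over `M` and the Stone space `S_y(M)` -/

/-- `b` and `c` have the same type over `M`. -/
def SameTypeOver {U : Type} [L.Structure U] (M : L.ElementarySubstructure U) {n : ℕ}
    (b c : Fin n → U) : Prop :=
  ∀ (k : ℕ) (ψ : L.Formula (Fin n ⊕ Fin k)) (m : Fin k → M),
    (ψ.Realize (Sum.elim b (fun i => (m i : U))) ↔
      ψ.Realize (Sum.elim c (fun i => (m i : U))))

/-- The setoid of "equality of type over `M`". -/
def typeSetoid {U : Type} [L.Structure U] (M : L.ElementarySubstructure U) (n : ℕ) :
    Setoid (Fin n → U) where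
  r := SameTypeOver M
  iseqv := ⟨fun _ _ _ _ => Iff.rfl, fun h k ψ m => (h k ψ m).symm,
    fun h h' k ψ m => (h k ψ m).trans (h' k ψ m)⟩

/-- The space `S_n(M)` of complete `n`-types over `M` (realized in the monster `U`). -/
def TypeSpace {U : Type} [L.Structure U] (M : L.ElementarySubstructure U) (n : ℕ) : Type :=
  Quotient (typeSetoid M n)

/-- The Stone topology on `S_n(M)`, generated by the sets of types containing a given
formula over `M`. -/
instance typeSpaceTopology {U : Type} [L.Structure U] (M : L.ElementarySubstructure U)
    (n : ℕ) : TopologicalSpace (TypeSpace M n) :=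
  TopologicalSpace.generateFrom
    { S | ∃ (k : ℕ) (ψ : L.Formula (Fin n ⊕ Fin k)) (m : Fin k → M),
        S = { p : TypeSpace M n | ∃ b : Fin n → U,
          Quotient.mk (typeSetoid M n) b = p ∧
            ψ.Realize (Sum.elim b (fun i => (m i : U))) } }

/-- The function `F_a^φ : S_y(M) → ℝ`, the indicator of `φ(a;y) ∈ p` for `a ∈ M^x`. -/
noncomputable def FunF {U : Type} [L.Structure U] {nx ny : ℕ}
    (φ : L.Formula (Fin nx ⊕ Fin ny)) (M : L.ElementarySubstructure U)
    (a : Fin nx → M) (p : TypeSpace M ny) : ℝ :=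
  Set.indicator
    { q : TypeSpace M ny | ∃ b : Fin ny → U, Quotient.mk (typeSetoid M ny) b = q ∧
        φ.Realize (Sum.elim (fun i => (a i : U)) b) } (fun _ => 1) p

/-- The family `𝔽_M^φ = {F_a^φ : a ∈ M^x}` of functions on `S_y(M)`. -/
def FamilyF {U : Type} [L.Structure U] {nx ny : ℕ}
    (φ : L.Formula (Fin nx ⊕ Fin ny)) (M : L.ElementarySubstructure U) :
    Set (TypeSpace M ny → ℝ) :=
  Set.range (fun a : Fin nx → M => FunF φ M a)

/-- The function `F_μ^φ : S_y(M) → ℝ`, `p ↦ μ(φ(x;b))` for `b ⊨ p` (well defined when `μ`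
is `φ`-invariant over `M`). -/
noncomputable def FunMu {U : Type} [L.Structure U] {nx ny : ℕ}
    (φ : L.Formula (Fin nx ⊕ Fin ny)) (M : L.ElementarySubstructure U)
    (μ : KeislerMeasure U φ) (p : TypeSpace M ny) : ℝ :=
  μ.toFun (phiSet φ (Quotient.out p))

/-! ### Properties of local Keisler measures -/

/-- `μ` is `φ`-invariant over `M`. -/
def PhiInvariant {U : Type} [L.Structure U] {nx ny : ℕ}
    (φ : L.Formula (Fin nx ⊕ Fin ny)) (M : L.ElementarySubstructure U)
    (μ : KeislerMeasure U φ) : Prop :=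
  ∀ b c : Fin ny → U, SameTypeOver M b c → μ.toFun (phiSet φ b) = μ.toFun (phiSet φ c)

/-- `μ` is `M`-invariant: automorphisms of `U` fixing `M` pointwise preserve the measure of
every set in `Def_φ(U)`. -/
def MInvariant {U : Type} [L.Structure U] {nx ny : ℕ}
    (φ : L.Formula (Fin nx ⊕ Fin ny)) (M : L.ElementarySubstructure U)
    (μ : KeislerMeasure U φ) : Prop :=
  ∀ σ : U ≃[L] U, (∀ m : M, σ (m : U) = (m : U)) → ∀ s : Set (Fin nx → U), InPhiAlg φ s →
    μ.toFun ((fun a : Fin nx → U => (σ : U → U) ∘ a) '' s) = μ.toFun s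

/-- `μ` is `φ`-definable over `M` (Definition 4.3(i)). -/
def PhiDefinable {U : Type} [L.Structure U] {nx ny : ℕ}
    (φ : L.Formula (Fin nx ⊕ Fin ny)) (M : L.ElementarySubstructure U)
    (μ : KeislerMeasure U φ) : Prop :=
  ∀ ε : ℝ, 0 < ε → ∃ (m k : ℕ) (ψ : Fin m → L.Formula (Fin ny ⊕ Fin k)) (c : Fin k → M),
    (∀ b : Fin ny → U, ∃! i : Fin m, (ψ i).Realize (Sum.elim b (fun j => (c j : U)))) ∧
    ∀ i : Fin m, ∀ e e' : Fin ny → U,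
      (ψ i).Realize (Sum.elim e (fun j => (c j : U))) →
      (ψ i).Realize (Sum.elim e' (fun j => (c j : U))) →
      |μ.toFun (phiSet φ e) - μ.toFun (phiSet φ e')| < ε

/-- `μ` is finitely satisfiable over `M`: every `φ`-formula of positive measure has a
realization in `M`. -/
def FinSat {U : Type} [L.Structure U] {nx ny : ℕ}
    (φ : L.Formula (Fin nx ⊕ Fin ny)) (M : L.ElementarySubstructure U)
    (μ : KeislerMeasure U φ) : Prop :=
  ∀ s : Set (Fin nx → U), InPhiAlg φ s → 0 < μ.toFun s →
    ∃ a : Fin nx → M, (fun i => (a i : U)) ∈ s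

/-- `μ` is `φ`-generically stable over `M` (Definition 4.3(iii)). -/
def PhiGenericallyStable {U : Type} [L.Structure U] {nx ny : ℕ}
    (φ : L.Formula (Fin nx ⊕ Fin ny)) (M : L.ElementarySubstructure U)
    (μ : KeislerMeasure U φ) : Prop :=
  PhiDefinable φ M μ ∧ FinSat φ M μ

/-! ### The algebra `Δ_φ` of partitioned formulas and full generic stability -/

/-- The family `Δ_φ` of Boolean combinations `θ(x; y_1, ..., y_k)` of the formulas
`φ(x;y_i)`, viewed as set-valued maps on tuples of parameters. -/
inductive InDeltaPhi {U : Type} [L.Structure U] {nx ny : ℕ}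
    (φ : L.Formula (Fin nx ⊕ Fin ny)) :
    (k : ℕ) → ((Fin k → Fin ny → U) → Set (Fin nx → U)) → Prop
  | inst (k : ℕ) (j : Fin k) : InDeltaPhi φ k (fun bs => phiSet φ (bs j))
  | empty (k : ℕ) : InDeltaPhi φ k (fun _ => ∅)
  | compl {k : ℕ} {G} : InDeltaPhi φ k G → InDeltaPhi φ k (fun bs => (G bs)ᶜ)
  | union {k : ℕ} {G H} : InDeltaPhi φ k G → InDeltaPhi φ k H →
      InDeltaPhi φ k (fun bs => G bs ∪ H bs)

/-- `μ` is definable over `M` (Definition 4.11): for every `θ(x;ȳ) ∈ Δ_φ` and `ε > 0` there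
is a partition of `U^ȳ` into `M`-definable pieces on which `μ(θ(x;·))` varies less than `ε`. -/
def DefinableOver {U : Type} [L.Structure U] {nx ny : ℕ}
    (φ : L.Formula (Fin nx ⊕ Fin ny)) (M : L.ElementarySubstructure U)
    (μ : KeislerMeasure U φ) : Prop :=
  ∀ (k : ℕ) (G : (Fin k → Fin ny → U) → Set (Fin nx → U)), InDeltaPhi φ k G →
    ∀ ε : ℝ, 0 < ε →
      ∃ (m j : ℕ) (ρ : Fin m → L.Formula ((Fin k × Fin ny) ⊕ Fin j)) (c : Fin j → M),
        (∀ bs : Fin k → Fin ny → U, ∃! i : Fin m,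
          (ρ i).Realize (Sum.elim (fun q => bs q.1 q.2) (fun t => (c t : U)))) ∧
        ∀ i : Fin m, ∀ e e' : Fin k → Fin ny → U,
          (ρ i).Realize (Sum.elim (fun q => e q.1 q.2) (fun t => (c t : U))) →
          (ρ i).Realize (Sum.elim (fun q => e' q.1 q.2) (fun t => (c t : U))) →
          |μ.toFun (G e) - μ.toFun (G e')| < ε

/-- `μ` is generically stable over `M` (Definition 4.11). -/
def GenericallyStable {U : Type} [L.Structure U] {nx ny : ℕ}
    (φ : L.Formula (Fin nx ⊕ Fin ny)) (M : L.ElementarySubstructure U)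
    (μ : KeislerMeasure U φ) : Prop :=
  DefinableOver φ M μ ∧ FinSat φ M μ

/-- The average measure `Av(ā)` of the finite sequence `ā = (a_1, ..., a_n)`. -/
noncomputable def Av {α : Type*} {n : ℕ} (a : Fin n → α) (s : Set α) : ℝ :=
  (∑ i : Fin n, Set.indicator s (fun _ => (1 : ℝ)) (a i)) / n

/-- `μ` is finitely approximable over `M` (Definition 4.12). -/
def FinApprox {U : Type} [L.Structure U] {nx ny : ℕ}
    (φ : L.Formula (Fin nx ⊕ Fin ny)) (M : L.ElementarySubstructure U)
    (μ : KeislerMeasure U φ) : Prop :=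
  ∀ (k : ℕ) (G : (Fin k → Fin ny → U) → Set (Fin nx → U)), InDeltaPhi φ k G →
    ∀ ε : ℝ, 0 < ε → ∃ (n : ℕ), 0 < n ∧ ∃ a : Fin n → (Fin nx → M),
      ∀ bs : Fin k → Fin ny → U,
        |μ.toFun (G bs) - Av (fun i => fun q => ((a i q : U))) (G bs)| < ε

/-! ### Convexity and dependence notions -/

/-- The set of all finite rational convex combinations of elements of `A`. -/
def ratConv {E : Type*} [AddCommMonoid E] [Module ℝ E] (A : Set E) : Set E :=
  { z | ∃ (n : ℕ) (r : Fin n → ℚ) (v : Fin n → E),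
      (∀ i, 0 < r i) ∧ (∑ i, ((r i : ℝ))) = 1 ∧ (∀ i, v i ∈ A) ∧ z = ∑ i, ((r i : ℝ)) • v i }

/-- A two-variable map `g : X × Y → ℝ` is `(r,ε)`-independent if for every `n` there is a
set `A ⊆ X` with `|A| > n` which `g` `(r,ε)`-shatters; `g` is independent if it is
`(r,ε)`-independent for some `r ∈ (0,1)` and `ε > 0`, and dependent otherwise. -/
def MapIndependent {X Y : Type*} (g : X → Y → ℝ) : Prop :=
  ∃ r : ℝ, r ∈ Set.Ioo (0 : ℝ) 1 ∧ ∃ ε : ℝ, 0 < ε ∧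
    ∀ n : ℕ, ∃ A : Finset X, n < A.card ∧
      ∀ K ⊆ A, ∃ b : Y, ∀ a ∈ A, (g a b ≤ r ↔ a ∈ K) ∧ (r + ε ≤ g a b ↔ a ∉ K)

/-- A set `A ⊆ ℝ^Y` is sequentially independent if there are a sequence `(f_n)` of elements
of `A`, a real `r`, and `ε > 0` such that for every `I ⊆ ℕ` there is `b_I ∈ Y` with
`{n : f_n(b_I) ≤ r} = I` and `{n : f_n(b_I) ≥ r + ε} = ℕ ∖ I`. -/
def SeqIndependent {Y : Type*} (A : Set (Y → ℝ)) : Prop :=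
  ∃ f : ℕ → (Y → ℝ), (∀ n, f n ∈ A) ∧ ∃ r ε : ℝ, 0 < ε ∧
    ∀ I : Set ℕ, ∃ b : Y, {n : ℕ | f n b ≤ r} = I ∧ {n : ℕ | r + ε ≤ f n b} = Iᶜ


/-!
Write `R a b` for `φ(a;b)`. Pulled back along `U^y → S_y(M)`, a sequentially independent sequence
in `conv(𝔽_M^φ)` yields, for every `m`, points `c_1, …, c_m` that are `(r, ε)`-shattered by convex
combinations `g_T = ∑ₓ w_x 1_{R(a_x, ·)}`. By Hoeffding's inequality and a union bound, each `g_T`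
is within `ε/2` of an empirical average of `n ≈ log m / ε²` of these indicators simultaneously at
all `c_i`, so `T` can be read off from `n` traces `{i | R(a, c_i)}`. Sauer–Shelah, applied to the
dual of the NIP relation `R`, bounds the number of traces by `(m+1)^(2^d)`; hence
`2^m ≤ (m+1)^(2^d n)`, which fails for large `m`.
-/

open MeasureTheory ProbabilityTheory

section Sampling

open Real

variable {Ω : Type*} [MeasurableSpace Ω] (ν : Measure Ω) [IsProbabilityMeasure ν]

theorem hasSubgaussianMGF_sum_sub_integral {q : Ω → ℝ} (hq : Measurable q)
    (hq01 : ∀ x, q x ∈ Icc (0 : ℝ) 1) (n : ℕ) :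
    HasSubgaussianMGF (fun ω : Fin n → Ω => ∑ j, (q (ω j) - ν[q])) (n / 4)
      (Measure.pi fun _ => ν) := by
  have hq' : HasSubgaussianMGF (fun x => q x - ν[q]) ((‖(1 : ℝ) - 0‖₊ / 2) ^ 2) ν :=
    hasSubgaussianMGF_of_mem_Icc hq.aemeasurable (ae_of_all _ hq01)
  have hindep : iIndepFun (fun j (ω : Fin n → Ω) => q (ω j) - ν[q]) (Measure.pi fun _ => ν) :=
    iIndepFun_pi (X := fun _ x => q x - ν[q]) fun _ => (hq.sub_const _).aemeasurable
  have hcoord (j : Fin n) : HasSubgaussianMGF (fun ω : Fin n → Ω => q (ω j) - ν[q])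
      ((‖(1 : ℝ) - 0‖₊ / 2) ^ 2) (Measure.pi fun _ => ν) := by
    refine HasSubgaussianMGF.of_map (X := fun x => q x - ν[q]) (Y := fun ω : Fin n → Ω => ω j)
      (measurable_pi_apply j).aemeasurable ?_
    rwa [(measurePreserving_eval (fun _ => ν) j).map_eq]
  have hsum := HasSubgaussianMGF.sum_of_iIndepFun hindep (s := Finset.univ) fun j _ => hcoord j
  convert hsum using 1
  norm_num [div_eq_mul_inv]

theorem measureReal_abs_sum_sub_integral_ge_le {q : Ω → ℝ} (hq : Measurable q)
    (hq01 : ∀ x, q x ∈ Icc (0 : ℝ) 1) (n : ℕ) {s : ℝ} (hs : 0 ≤ s) :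
    (Measure.pi fun _ : Fin n => ν).real {ω | s ≤ |∑ j, (q (ω j) - ν[q])|}
      ≤ 2 * exp (-(2 * s ^ 2 / n)) := by
  have hS := hasSubgaussianMGF_sum_sub_integral ν hq hq01 n
  have htail : -s ^ 2 / (2 * ((n / 4 : NNReal) : ℝ)) = -(2 * s ^ 2 / n) := by
    push_cast; ring
  calc (Measure.pi fun _ : Fin n => ν).real {ω | s ≤ |∑ j, (q (ω j) - ν[q])|}
      ≤ (Measure.pi fun _ : Fin n => ν).real
          ({ω | s ≤ ∑ j, (q (ω j) - ν[q])} ∪ {ω | s ≤ -∑ j, (q (ω j) - ν[q])}) :=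
        measureReal_mono fun _ hω => le_abs.1 (Set.mem_ofPred.1 hω)
    _ ≤ _ := measureReal_union_le _ _
    _ ≤ exp (-(2 * s ^ 2 / n)) + exp (-(2 * s ^ 2 / n)) := by
        rw [← htail]
        exact add_le_add (hS.measure_ge_le hs) (hS.neg.measure_ge_le hs)
    _ = 2 * exp (-(2 * s ^ 2 / n)) := by ring

theorem exists_forall_abs_sum_sub_integral_lt {ι : Type*} [Fintype ι] {n : ℕ} (p : ι → Ω → ℝ)
    (hp : ∀ i, Measurable (p i)) (hp01 : ∀ i x, p i x ∈ Icc (0 : ℝ) 1) {s : ℝ} (hs : 0 ≤ s)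
    (hsn : 2 * Fintype.card ι < exp (2 * s ^ 2 / n)) :
    ∃ ω : Fin n → Ω, ∀ i, |∑ j, (p i (ω j) - ν[p i])| < s := by
  by_contra! hbad
  have hcover : Set.univ ⊆ ⋃ i, {ω : Fin n → Ω | s ≤ |∑ j, (p i (ω j) - ν[p i])|} := by
    intro ω _
    simpa using hbad ω
  have hone := calc (1 : ℝ) = (Measure.pi fun _ : Fin n => ν).real Set.univ := by simp
    _ ≤ _ := measureReal_mono hcover
    _ ≤ _ := measureReal_iUnion_fintype_le _
    _ ≤ ∑ _i : ι, 2 * exp (-(2 * s ^ 2 / n)) := Finset.sum_le_sum fun i _ =>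
        measureReal_abs_sum_sub_integral_ge_le ν (hp i) (hp01 i) n hs
    _ = 2 * Fintype.card ι * exp (-(2 * s ^ 2 / n)) := by
        rw [Finset.sum_const, Finset.card_univ, nsmul_eq_mul]; ring
  rw [exp_neg, ← div_eq_mul_inv, le_div_iff₀ (exp_pos _), one_mul] at hone
  linarith

end Sampling

section Relation

variable {α β : Type*} (R : α → β → Prop)

def RelShatters (A : Finset α) : Prop :=
  ∀ K ⊆ A, ∃ b, ∀ x ∈ A, R x b ↔ x ∈ K

open Classical in
noncomputable def traceFamily {ι : Type*} [Fintype ι] (c : ι → β) : Finset (Finset ι) :=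
  Finset.univ.filter fun u => ∃ a, ∀ i, i ∈ u ↔ R a (c i)

variable {R} {d : ℕ}

theorem card_lt_two_pow_of_relShatters_dual (hd : ∀ A, RelShatters R A → A.card < d)
    {ι : Type*} {c : ι → β} {s : Finset ι} (hs : RelShatters (fun i a => R a (c i)) s) :
    s.card < 2 ^ d := by
  classical
  -- `2 ^ d` points of `s`, indexed by the subsets `S` of `Fin d`, would give `d` elements `a i`
  -- with `R (a i) (c S) ↔ i ∈ S`, i.e. a set of size `d` shattered by `R`.
  by_contra! hle
  obtain ⟨e⟩ : Nonempty (Finset (Fin d) ↪ s) :=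
    Function.Embedding.nonempty_of_card_le (by simpa using hle)
  let E : Finset (Fin d) → ι := fun S => e S
  have hsub (i : Fin d) : (Finset.univ.filter (i ∈ ·)).map (e.trans (.subtype _)) ⊆ s := by
    intro x hx
    obtain ⟨S, -, rfl⟩ := Finset.mem_map.1 hx
    exact (e S).2
  choose a ha using fun i => hs _ (hsub i)
  have hmem (i : Fin d) (S : Finset (Fin d)) : R (a i) (c (E S)) ↔ i ∈ S := by
    refine (ha i (E S) (e S).2).trans ?_
    simp [E, e.injective.eq_iff]
  have hinj : Function.Injective a := fun i j hij => Eq.symm <| Finset.mem_singleton.1 <|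
    (hmem j {i}).1 (hij ▸ (hmem i {i}).2 (Finset.mem_singleton_self i))
  have hA : RelShatters R (Finset.univ.image a) := by
    intro K _
    refine ⟨c (E (Finset.univ.filter fun i => a i ∈ K)), ?_⟩
    intro x hx
    obtain ⟨i, -, rfl⟩ := Finset.mem_image.1 hx
    simp [hmem]
  simpa [Finset.card_image_of_injective _ hinj] using hd _ hA

theorem sum_Iic_choose_le_pow (n v : ℕ) : ∑ k ∈ Finset.Iic v, n.choose k ≤ (n + 1) ^ v := by
  rw [add_pow, ← Nat.range_succ_eq_Iic]
  refine Finset.sum_le_sum fun k hk => ?_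
  rw [one_pow, mul_one]
  exact (Nat.choose_le_pow n k).trans
    (Nat.le_mul_of_pos_right _ (Nat.choose_pos (Nat.lt_succ_iff.1 (Finset.mem_range.1 hk))))

theorem card_traceFamily_le (hd : ∀ A, RelShatters R A → A.card < d) {ι : Type*} [Fintype ι]
    (c : ι → β) : (traceFamily R c).card ≤ (Fintype.card ι + 1) ^ 2 ^ d := by
  classical
  have hvc : (traceFamily R c).vcDim ≤ 2 ^ d := by
    refine Finset.sup_le fun s hs => (card_lt_two_pow_of_relShatters_dual (c := c) hd ?_).le
    intro t ht
    obtain ⟨u, hu, hsu⟩ := (Finset.mem_shatterer.1 hs) ht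
    obtain ⟨a, ha⟩ := (Finset.mem_filter.1 hu).2
    refine ⟨a, fun i hi => ?_⟩
    show R a (c i) ↔ i ∈ t
    rw [← ha, ← hsu, Finset.mem_inter]
    exact ⟨fun h => ⟨hi, h⟩, And.right⟩
  calc (traceFamily R c).card ≤ (traceFamily R c).shatterer.card :=
        Finset.card_le_card_shatterer _
    _ ≤ ∑ k ∈ Finset.Iic (traceFamily R c).vcDim, (Fintype.card ι).choose k :=
        Finset.card_shatterer_le_sum_vcDim
    _ ≤ (Fintype.card ι + 1) ^ (traceFamily R c).vcDim := sum_Iic_choose_le_pow _ _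
    _ ≤ (Fintype.card ι + 1) ^ 2 ^ d := Nat.pow_le_pow_right (Nat.succ_pos _) hvc

end Relation

section Decoding

open Real

variable {α β : Type*} {R : α → β → Prop}

theorem exists_fin_of_mem_convexHull_range {E : Type*} [AddCommGroup E] [Module ℝ E]
    {g : α → E} {f : E} (hf : f ∈ convexHull ℝ (range g)) :
    ∃ (k : ℕ) (w : Fin k → ℝ) (a : Fin k → α),
      (∀ x, 0 ≤ w x) ∧ ∑ x, w x = 1 ∧ f = ∑ x, w x • g (a x) := by
  obtain ⟨ι, _, w, z, hw0, hw1, hz, rfl⟩ := mem_convexHull_iff_exists_fintype.1 hf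
  choose a ha using hz
  let e := (Fintype.equivFin ι).symm
  refine ⟨Fintype.card ι, w ∘ e, a ∘ e, fun x => hw0 _, ?_, ?_⟩
  · rwa [← e.sum_comp] at hw1
  · simp only [Function.comp_apply, ha, e.sum_comp fun i => w i • z i]

theorem exists_forall_abs_sum_sub_lt_of_mem_convexHull {f : α → β → ℝ}
    (hf01 : ∀ a b, f a b ∈ Icc (0 : ℝ) 1) {g : β → ℝ} (hg : g ∈ convexHull ℝ (range f))
    {ι : Type*} [Fintype ι] (c : ι → β) {n : ℕ} {s : ℝ} (hs : 0 ≤ s)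
    (hsn : 2 * Fintype.card ι < exp (2 * s ^ 2 / n)) :
    ∃ a : Fin n → α, ∀ i, |∑ j, f (a j) (c i) - n * g (c i)| < s := by
  obtain ⟨k, w, a, hw0, hw1, rfl⟩ := exists_fin_of_mem_convexHull_range hg
  let ν : PMF (Fin k) := PMF.ofFintype (fun x => ENNReal.ofReal (w x)) (by
    rw [← ENNReal.ofReal_sum_of_nonneg fun x _ => hw0 x, hw1, ENNReal.ofReal_one])
  obtain ⟨v, hv⟩ := exists_forall_abs_sum_sub_integral_lt ν.toMeasure (fun i x => f (a x) (c i))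
    (fun _ => .of_discrete) (fun _ _ => hf01 _ _) hs hsn
  refine ⟨a ∘ v, fun i => ?_⟩
  have hmean : ∫ x, f (a x) (c i) ∂ν.toMeasure = (∑ x, w x • f (a x)) (c i) := by
    simp [PMF.integral_eq_sum, ν, ENNReal.toReal_ofReal (hw0 _)]
  simpa [Finset.sum_sub_distrib, hmean] using hv i

theorem two_pow_card_le_card_traceFamily_pow {ι : Type*} [Fintype ι] {r ε : ℝ} {n : ℕ}
    (c : ι → β)
    (hc : ∀ T : Finset ι, ∃ g ∈ convexHull ℝ (range fun a => {b | R a b}.indicator 1),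
      ∀ i, (i ∈ T → g (c i) ≤ r) ∧ (i ∉ T → r + ε ≤ g (c i)))
    (hε : 0 < ε) (hn : 2 * Fintype.card ι < exp (n * ε ^ 2 / 2)) :
    2 ^ Fintype.card ι ≤ (traceFamily R c).card ^ n := by
  classical
  have hsn : 2 * Fintype.card ι < exp (2 * (n * ε / 2) ^ 2 / n) := by
    rcases n.eq_zero_or_pos with rfl | hn0
    · simpa using hn
    · convert hn using 2; field_simp
  have hf01 (a : α) (b : β) : {b | R a b}.indicator (1 : β → ℝ) b ∈ Icc (0 : ℝ) 1 := by
    simp only [Set.indicator_apply]; split_ifs <;> norm_num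
  let decode : (Fin n → Finset ι) → Finset ι := fun u =>
    Finset.univ.filter fun i => ((Finset.univ.filter (i ∈ u ·)).card : ℝ) < n * (r + ε / 2)
  have hdecode (T : Finset ι) :
      ∃ u ∈ Fintype.piFinset fun _ => traceFamily R c, decode u = T := by
    obtain ⟨g, hg, hgT⟩ := hc T
    obtain ⟨a, ha⟩ :=
      exists_forall_abs_sum_sub_lt_of_mem_convexHull hf01 hg c (by positivity) hsn
    refine ⟨fun j => Finset.univ.filter fun i => R (a j) (c i), ?_, ?_⟩
    · simp only [Fintype.mem_piFinset, traceFamily, Finset.mem_filter]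
      exact fun j => ⟨Finset.mem_univ _, a j, by simp⟩
    ext i
    have hcount : ((Finset.univ.filter fun j => R (a j) (c i)).card : ℝ) =
        ∑ j, {b | R (a j) b}.indicator 1 (c i) := by
      simp only [Finset.natCast_card_filter, Set.indicator_apply, Set.mem_ofPred_eq, Pi.one_apply]
    simp only [decode, Finset.mem_filter, Finset.mem_univ, true_and]
    rw [hcount]
    obtain ⟨hlo, hhi⟩ := abs_lt.1 (ha i)
    have hn0 : (0 : ℝ) ≤ n := n.cast_nonneg
    by_cases hi : i ∈ T
    · simp only [hi, iff_true]
      nlinarith [mul_le_mul_of_nonneg_left ((hgT i).1 hi) hn0]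
    · simp only [hi, iff_false, not_lt]
      nlinarith [mul_le_mul_of_nonneg_left ((hgT i).2 hi) hn0]
  calc 2 ^ Fintype.card ι = (Finset.univ : Finset (Finset ι)).card := by simp
    _ ≤ (Fintype.piFinset fun _ : Fin n => traceFamily R c).card :=
        Finset.card_le_card_of_surjOn decode fun T _ => by simpa using hdecode T
    _ = (traceFamily R c).card ^ n := by simp

end Decoding

namespace SeqIndependent

variable {Y : Type*}

theorem mono {A B : Set (Y → ℝ)} (hAB : A ⊆ B) (h : SeqIndependent A) : SeqIndependent B := by
  obtain ⟨f, hfA, hrest⟩ := h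
  exact ⟨f, fun n => hAB (hfA n), hrest⟩

theorem image_funLeft {Y' : Type*} {A : Set (Y → ℝ)} (h : SeqIndependent A)
    {e : Y' → Y} (he : Function.Surjective e) :
    SeqIndependent (LinearMap.funLeft ℝ ℝ e '' A) := by
  obtain ⟨f, hfA, r, ε, hε, hI⟩ := h
  refine ⟨fun n => f n ∘ e, fun n => ⟨f n, hfA n, rfl⟩, r, ε, hε, fun I => ?_⟩
  obtain ⟨b, hb⟩ := hI I
  obtain ⟨b', rfl⟩ := he b
  exact ⟨b', hb⟩

theorem exists_forall_finset {A : Set (Y → ℝ)} (h : SeqIndependent A) :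
    ∃ r ε : ℝ, 0 < ε ∧ ∀ m : ℕ, ∃ c : Fin m → Y, ∀ T : Finset (Fin m),
      ∃ g ∈ A, ∀ i, (i ∈ T → g (c i) ≤ r) ∧ (i ∉ T → r + ε ≤ g (c i)) := by
  obtain ⟨f, hfA, r, ε, hε, hI⟩ := h
  choose b hb using hI
  refine ⟨r, ε, hε, fun m => ?_⟩
  obtain ⟨s, hs⟩ := exists_surjective_nat (Finset (Fin m))
  refine ⟨fun i => b {n | i ∈ s n}, fun T => ?_⟩
  obtain ⟨n, rfl⟩ := hs T
  exact ⟨f n, hfA n, fun i => ⟨fun hi => (Set.ext_iff.1 (hb _).1 n).2 hi,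
    fun hi => (Set.ext_iff.1 (hb _).2 n).2 hi⟩⟩

end SeqIndependent

theorem exists_mul_succ_sq_lt_two_pow (C : ℕ) : ∃ K : ℕ, C * (K + 1) ^ 2 < 2 ^ K := by
  have hlim : Tendsto (fun K : ℕ => ((K + 1 : ℕ) : ℝ) ^ 2 / 2 ^ (K + 1)) atTop (𝓝 0) :=
    (tendsto_pow_const_div_const_pow_of_one_lt 2 one_lt_two).comp (tendsto_add_atTop_nat 1)
  obtain ⟨K, hK⟩ :=
    (hlim.eventually (gt_mem_nhds (by positivity : (0 : ℝ) < 1 / (2 * C + 1)))).exists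
  refine ⟨K, ?_⟩
  rw [div_lt_div_iff₀ (by positivity) (by positivity)] at hK
  have hR : ((2 * C + 1) * (K + 1) ^ 2 : ℝ) < 2 ^ K * 2 := by
    push_cast at hK; linarith [pow_succ (2 : ℝ) K]
  have hN : (2 * C + 1) * (K + 1) ^ 2 < 2 ^ K * 2 := by exact_mod_cast hR
  nlinarith

open Real in
theorem not_seqIndependent_convexHull_indicator {α β : Type*} {R : α → β → Prop} {d : ℕ}
    (hd : ∀ A, RelShatters R A → A.card < d) :
    ¬ SeqIndependent (convexHull ℝ (range fun a => {b | R a b}.indicator (1 : β → ℝ))) := by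
  intro h
  obtain ⟨r, ε, hε, hshat⟩ := h.exists_forall_finset
  set N := ⌈2 / ε ^ 2⌉₊
  obtain ⟨K, hK⟩ := exists_mul_succ_sq_lt_two_pow (2 ^ d * N)
  obtain ⟨c, hc⟩ := hshat (2 ^ K)
  have hN : 2 ≤ N * ε ^ 2 := (div_le_iff₀ (by positivity)).1 (Nat.le_ceil (2 / ε ^ 2))
  -- `m = 2 ^ K` points and `n = (K + 1) N` samples with `N ε² ≥ 2`: then `2 m < exp (n ε² / 2)`,
  -- while `2 ^ m ≤ (m + 1) ^ (2 ^ d n) ≤ 2 ^ (2 ^ d N (K + 1)²)` contradicts the choice of `K`.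
  have hn : 2 * Fintype.card (Fin (2 ^ K)) < exp (((K + 1) * N : ℕ) * ε ^ 2 / 2) := calc
    (2 * Fintype.card (Fin (2 ^ K)) : ℝ) = 2 ^ (K + 1) := by simp [pow_succ']
    _ < exp 1 ^ (K + 1) := pow_lt_pow_left₀ (by linarith [exp_one_gt_d9]) zero_le_two
        (Nat.succ_ne_zero K)
    _ = exp (K + 1) := by rw [← exp_nat_mul, mul_one]; push_cast; rfl
    _ ≤ exp (((K + 1) * N : ℕ) * ε ^ 2 / 2) := by
        gcongr; push_cast; nlinarith
  have hlower := two_pow_card_le_card_traceFamily_pow c hc hε hn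
  have hupper := card_traceFamily_le hd c
  rw [Fintype.card_fin] at hlower hupper
  have hpow : 2 ^ 2 ^ K ≤ 2 ^ (2 ^ d * N * (K + 1) ^ 2) := calc
    2 ^ 2 ^ K ≤ ((2 ^ K + 1) ^ 2 ^ d) ^ ((K + 1) * N) := hlower.trans (by gcongr)
    _ ≤ ((2 ^ (K + 1)) ^ 2 ^ d) ^ ((K + 1) * N) := by gcongr; rw [pow_succ]; omega
    _ = 2 ^ (2 ^ d * N * (K + 1) ^ 2) := by rw [← pow_mul, ← pow_mul]; ring_nf
  exact absurd ((Nat.pow_le_pow_iff_right (by norm_num)).1 hpow) (not_le.2 hK)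

section Types

variable {U : Type} [L.Structure U]

theorem FormulaIsNIP.exists_card_lt {nx ny : ℕ} {φ : L.Formula (Fin nx ⊕ Fin ny)}
    (h : FormulaIsNIP U φ) :
    ∃ d, ∀ A : Finset (Fin nx → U),
      RelShatters (fun a b => φ.Realize (Sum.elim a b)) A → A.card < d := by
  by_contra! H
  exact h fun n => (H n).imp fun _ hA => ⟨hA.2, hA.1⟩

theorem SameTypeOver.realize_iff {M : L.ElementarySubstructure U} {nx ny : ℕ}
    {b b' : Fin ny → U} (h : SameTypeOver M b b') (φ : L.Formula (Fin nx ⊕ Fin ny))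
    (a : Fin nx → M) :
    φ.Realize (Sum.elim (fun i => (a i : U)) b) ↔ φ.Realize (Sum.elim (fun i => (a i : U)) b') := by
  simpa [FirstOrder.Language.Formula.realize_relabel, Sum.elim_swap] using
    h nx (φ.relabel Sum.swap) a

theorem funF_mk {nx ny : ℕ} (φ : L.Formula (Fin nx ⊕ Fin ny))
    (M : L.ElementarySubstructure U) (a : Fin nx → M) (b : Fin ny → U) :
    FunF φ M a (Quotient.mk (typeSetoid M ny) b) =
      {b | φ.Realize (Sum.elim (fun i => (a i : U)) b)}.indicator 1 b := by
  have hmem : Quotient.mk (typeSetoid M ny) b ∈ {q : TypeSpace M ny | ∃ b',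
      Quotient.mk (typeSetoid M ny) b' = q ∧ φ.Realize (Sum.elim (fun i => (a i : U)) b')} ↔
      φ.Realize (Sum.elim (fun i => (a i : U)) b) :=
    ⟨fun ⟨_, hb', hφ⟩ => ((Quotient.exact hb').realize_iff φ a).1 hφ, fun h => ⟨b, rfl, h⟩⟩
  unfold FunF
  by_cases h : φ.Realize (Sum.elim (fun i => (a i : U)) b)
  · exact (Set.indicator_of_mem (hmem.2 h) _).trans (Set.indicator_of_mem h 1).symm
  · exact (Set.indicator_of_notMem (mt hmem.1 h) _).trans (Set.indicator_of_notMem h 1).symm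

end Types

theorem stmt_7_general
    {L : FirstOrder.Language.{0, 0}}
    {U : Type} [L.Structure U]
    (M : L.ElementarySubstructure U)
    {nx ny : ℕ} (φ : L.Formula (Fin nx ⊕ Fin ny))    (hNIP : FormulaIsNIP U φ) :
    ¬ SeqIndependent (convexHull ℝ (FamilyF φ M)) := by
  obtain ⟨d, hd⟩ := FormulaIsNIP.exists_card_lt hNIP
  intro h
  apply not_seqIndependent_convexHull_indicator hd
  refine (h.image_funLeft (e := Quotient.mk (typeSetoid M ny)) Quotient.mk_surjective).mono ?_
  rw [LinearMap.image_convexHull]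
  refine convexHull_mono ?_
  rintro _ ⟨_, ⟨a, rfl⟩, rfl⟩
  exact ⟨fun i => (a i : U), funext fun b => (funF_mk φ M a b).symm⟩

/-- **Theorem 3.14.** If `φ(x;y)` is NIP, then `conv(𝔽_M^φ)`, viewed as a subset of
`ℝ^{S_y(M)}`, is sequentially dependent. -/
theorem stmt_7
    {L : FirstOrder.Language.{0, 0}} (T : L.Theory) (hT : T.IsComplete)
    (hL : L.card ≤ Cardinal.aleph0)
    {U : Type} [L.Structure U] [Nonempty U] (hUT : T.Model U)
    (κ : Cardinal.{0}) (hκ : Cardinal.aleph0 < κ) (hreg : κ.IsRegular)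
    (hsat : IsSaturated L U κ) (hhom : IsStronglyHomogeneous L U κ)
    (M : L.ElementarySubstructure U) (hM : #M < κ)
    {nx ny : ℕ} (φ : L.Formula (Fin nx ⊕ Fin ny))    (hNIP : FormulaIsNIP U φ) :
    ¬ SeqIndependent (convexHull ℝ (FamilyF φ M)) :=
  stmt_7_general M φ hNIP
end

section
/- Let T be a complete first-order theory in a countable language L, U a monster model of T (κ-saturated and strongly κ-homogeneous for a sufficiently large cardinal κ), M an elementary substructure of U with |M| < κ, and φ(x;y) a partitioned L-formula. Let μ ∈ 𝔐_φ(U) be finitely satisfiable over M, and let X = S_y(M). Then the function F_μ^φ lies in the closure of conv_ℚ(𝔽_M^φ) taken in ℝ^X with the product topology. -/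
open FirstOrder Cardinal Set Filter Topology

variable {L : FirstOrder.Language.{0, 0}}

/-! Fix finitely many types `p ∈ J` with realizations `b_p`. The instances `φ(x;b_p)` cut `U^x`
into finitely many atoms of `Def_φ(U)`, and finite satisfiability puts a point `a_K ∈ M^x` in
every atom `K` of positive measure. The real convex combination `∑_K μ(K) F_{a_K}` then agrees
with `F_μ` on `J`, so `F_μ` is a pointwise limit of real convex combinations of `𝔽_M^φ`; these in
turn are limits of rational ones, by normalizing rational approximations of their weights. -/

theorem mem_closure_of_forall_finset_exists_eqOn {X Y : Type*} [TopologicalSpace Y]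
    {S : Set (X → Y)} {f : X → Y} (h : ∀ J : Finset X, ∃ g ∈ S, EqOn g f J) :
    f ∈ closure S := by
  choose g hgS hgf using h
  refine mem_closure_of_tendsto (b := atTop) (f := g) ?_ (Eventually.of_forall hgS)
  refine tendsto_pi_nhds.2 fun x => tendsto_const_nhds.congr' ?_
  filter_upwards [eventually_ge_atTop {x}] with J hJ
  exact (hgf J (hJ (Finset.mem_singleton_self x))).symm

section RatConv

variable {E : Type*} [AddCommGroup E] [Module ℝ E] {A : Set E}

theorem sum_smul_mem_ratConv {ι : Type*} [Fintype ι] (r : ι → ℚ) (hr₀ : ∀ i, 0 < r i)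
    (hr₁ : ∑ i, (r i : ℝ) = 1) {z : ι → E} (hz : ∀ i, z i ∈ A) :
    ∑ i, (r i : ℝ) • z i ∈ ratConv A := by
  let e := (Fintype.equivFin ι).symm
  refine ⟨Fintype.card ι, r ∘ e, z ∘ e, fun i => hr₀ _, ?_, fun i => hz _, ?_⟩
  · simpa only [Function.comp_apply] using (e.sum_comp fun i => (r i : ℝ)).trans hr₁
  · exact (e.sum_comp fun i => (r i : ℝ) • z i).symm

variable [TopologicalSpace E] [ContinuousAdd E] [ContinuousSMul ℝ E]

theorem sum_smul_mem_closure_ratConv {ι : Type*} [Fintype ι] {w : ι → ℝ} (hw₀ : ∀ i, 0 ≤ w i)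
    (hw₁ : ∑ i, w i = 1) {z : ι → E} (hz : ∀ i, z i ∈ A) :
    ∑ i, w i • z i ∈ closure (ratConv A) := by
  have : Nonempty ι := by
    by_contra h
    simp [not_nonempty_iff.1 h] at hw₁
  set P : Set (ι → ℝ) := Set.pi univ fun _ => Ioi 0
  set Q : Set (ι → ℝ) := range (Pi.map fun _ (q : ℚ) => (q : ℝ))
  have hwP : w ∈ closure (P ∩ Q) := by
    have hQ : Dense Q := DenseRange.piMap fun _ => Rat.denseRange_cast
    refine closure_minimal (hQ.open_subset_closure_inter (isOpen_set_pi finite_univ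
      fun _ _ => isOpen_Ioi)) isClosed_closure ?_
    simp only [closure_pi_set, closure_Ioi]
    exact fun i _ => hw₀ i
  let normalize : (ι → ℝ) → E := fun q => (∑ j, q j)⁻¹ • ∑ i, q i • z i
  have hcont : ContinuousAt normalize w := by
    have hs : Continuous fun q : ι → ℝ => ∑ j, q j :=
      continuous_finsetSum _ fun j _ => continuous_apply j
    have hv : Continuous fun q : ι → ℝ => ∑ i, q i • z i :=
      continuous_finsetSum _ fun i _ => (continuous_apply i).smul continuous_const
    exact (hs.continuousAt.inv₀ (by simp [hw₁])).smul hv.continuousAt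
  have hw : normalize w = ∑ i, w i • z i := by simp [normalize, hw₁]
  refine hw ▸ closure_mono ?_ (mem_closure_image hcont hwP)
  rintro _ ⟨_, ⟨hqP, r, rfl⟩, rfl⟩
  have hr₀ : ∀ i, 0 < r i := fun i => by simpa using hqP i (mem_univ i)
  have hsum : 0 < ∑ j, r j := Finset.sum_pos (fun i _ => hr₀ i) Finset.univ_nonempty
  convert sum_smul_mem_ratConv (fun i => r i / ∑ j, r j) (fun i => div_pos (hr₀ i) hsum) ?_ hz
    using 1
  · simp only [normalize, Pi.map_apply, Finset.smul_sum, smul_smul]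
    push_cast
    simp only [div_eq_inv_mul]
  · push_cast
    rw [← Finset.sum_div, div_self]
    exact_mod_cast hsum.ne'

theorem convexHull_subset_closure_ratConv : convexHull ℝ A ⊆ closure (ratConv A) := by
  intro x hx
  obtain ⟨ι, _, w, z, hw₀, hw₁, hz, rfl⟩ := mem_convexHull_iff_exists_fintype.1 hx
  exact sum_smul_mem_closure_ratConv hw₀ hw₁ hz

end RatConv

def cell {α ι : Type*} (B : ι → Set α) (J K : Finset ι) : Set α :=
  {a | ∀ p ∈ J, a ∈ B p ↔ p ∈ K}

section Cell

variable {α ι : Type*} (B : ι → Set α) {J K : Finset ι} {q : ι}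

@[simp]
theorem cell_empty (K : Finset ι) : cell B ∅ K = Set.univ := by
  simp [cell]

theorem inter_cell_of_mem {p : ι} (hp : p ∈ J) (hpK : p ∈ K) : B p ∩ cell B J K = cell B J K :=
  inter_eq_right.2 fun _ ha => (ha p hp).2 hpK

theorem inter_cell_of_notMem {p : ι} (hp : p ∈ J) (hpK : p ∉ K) : B p ∩ cell B J K = ∅ :=
  eq_empty_of_forall_notMem fun _ ha => hpK ((ha.2 p hp).1 ha.1)

variable [DecidableEq ι]

theorem cell_insert_of_mem (hq : q ∈ K) : cell B (insert q J) K = cell B J K ∩ B q := by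
  ext a
  simp [cell, hq, and_comm]

theorem cell_insert_of_notMem (hq : q ∉ K) : cell B (insert q J) K = cell B J K ∩ (B q)ᶜ := by
  ext a
  simp [cell, hq, and_comm]

theorem cell_insert_right (hq : q ∉ J) : cell B J (insert q K) = cell B J K := by
  ext a
  refine forall₂_congr fun p hp => ?_
  rw [Finset.mem_insert, or_iff_right (ne_of_mem_of_not_mem hp hq)]

end Cell

section LocalMeasures

variable {U : Type} [L.Structure U] {nx ny : ℕ} {φ : L.Formula (Fin nx ⊕ Fin ny)}

theorem InPhiAlg.univ : InPhiAlg φ (univ : Set (Fin nx → U)) :=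
  compl_empty (α := Fin nx → U) ▸ InPhiAlg.empty.compl

theorem InPhiAlg.inter {s t : Set (Fin nx → U)} (hs : InPhiAlg φ s) (ht : InPhiAlg φ t) :
    InPhiAlg φ (s ∩ t) := by
  simpa only [compl_union, compl_compl] using (hs.compl.union ht.compl).compl

theorem InPhiAlg.cell {ι : Type*} (b : ι → Fin ny → U) (J K : Finset ι) :
    InPhiAlg φ (cell (fun p => phiSet φ (b p)) J K) := by
  classical
  induction J using Finset.induction_on with
  | empty => simpa using InPhiAlg.univ
  | insert q J _ ih =>
    by_cases hq : q ∈ K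
    · simpa only [cell_insert_of_mem _ hq] using ih.inter (InPhiAlg.basic (b q))
    · simpa only [cell_insert_of_notMem _ hq] using ih.inter (InPhiAlg.basic (b q)).compl

namespace KeislerMeasure

variable (μ : KeislerMeasure U φ)

@[simp]
theorem toFun_empty : μ.toFun ∅ = 0 := by
  have h := μ.additive ∅ ∅ .empty .empty (disjoint_empty _)
  rw [union_empty] at h
  linarith

theorem toFun_inter_add_inter_compl {s t : Set (Fin nx → U)} (hs : InPhiAlg φ s)
    (ht : InPhiAlg φ t) : μ.toFun (s ∩ t) + μ.toFun (s ∩ tᶜ) = μ.toFun s := by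
  rw [← μ.additive _ _ (hs.inter ht) (hs.inter ht.compl)
    (disjoint_compl_right.mono inter_subset_right inter_subset_right), inter_union_compl]

theorem sum_toFun_inter_cell {ι : Type*} [DecidableEq ι] (b : ι → Fin ny → U) (J : Finset ι)
    {s : Set (Fin nx → U)} (hs : InPhiAlg φ s) :
    ∑ K ∈ J.powerset, μ.toFun (s ∩ cell (fun p => phiSet φ (b p)) J K) = μ.toFun s := by
  induction J using Finset.induction_on with
  | empty => simp
  | insert q J hq ih =>
    rw [Finset.sum_powerset_insert hq, ← ih, ← Finset.sum_add_distrib]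
    refine Finset.sum_congr rfl fun K hK => ?_
    have hqK : q ∉ K := fun h => hq (Finset.mem_powerset.1 hK h)
    rw [cell_insert_of_notMem _ hqK, cell_insert_of_mem _ (Finset.mem_insert_self q K),
      cell_insert_right _ hq, ← inter_assoc, ← inter_assoc, add_comm]
    exact μ.toFun_inter_add_inter_compl (hs.inter (.cell b J K)) (.basic _)

end KeislerMeasure

end LocalMeasures

section FiniteSatisfiability

variable {U : Type} [L.Structure U] {nx ny : ℕ} (φ : L.Formula (Fin nx ⊕ Fin ny))
  (M : L.ElementarySubstructure U)

theorem realize_iff_of_sameTypeOver (a : Fin nx → M) {b c : Fin ny → U}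
    (h : SameTypeOver M b c) :
    φ.Realize (Sum.elim (fun i => (a i : U)) b) ↔ φ.Realize (Sum.elim (fun i => (a i : U)) c) := by
  simpa using h nx (φ.relabel Sum.swap) a

theorem funF_apply (a : Fin nx → M) (p : TypeSpace M ny) :
    FunF φ M a p = (phiSet φ p.out).indicator 1 (fun i => (a i : U)) := by
  have hmem : (∃ b, Quotient.mk (typeSetoid M ny) b = p ∧
      φ.Realize (Sum.elim (fun i => (a i : U)) b)) ↔ (fun i => (a i : U)) ∈ phiSet φ p.out := by
    refine ⟨fun ⟨b, hb, hφ⟩ => ?_, fun h => ⟨p.out, p.out_eq, h⟩⟩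
    exact (realize_iff_of_sameTypeOver φ M a (Quotient.exact (hb.trans p.out_eq.symm))).1 hφ
  classical
  simp only [FunF, indicator_apply, mem_ofPred_eq, hmem, Pi.one_apply]

theorem toFun_cell_mul_funF {μ : KeislerMeasure U φ} {J K : Finset (TypeSpace M ny)}
    {p : TypeSpace M ny} (hp : p ∈ J) {a : Fin nx → M}
    (ha : 0 < μ.toFun (cell (fun q => phiSet φ q.out) J K) →
      (fun i => (a i : U)) ∈ cell (fun q => phiSet φ q.out) J K) :
    μ.toFun (cell (fun q => phiSet φ q.out) J K) * FunF φ M a p =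
      μ.toFun (phiSet φ p.out ∩ cell (fun q => phiSet φ q.out) J K) := by
  rcases (μ.nonneg _ (.cell (fun q => q.out) J K)).eq_or_lt with hzero | hpos
  · by_cases hpK : p ∈ K
    · rw [inter_cell_of_mem (fun q => phiSet φ q.out) hp hpK, ← hzero, zero_mul]
    · rw [inter_cell_of_notMem (fun q => phiSet φ q.out) hp hpK, ← hzero, zero_mul,
        μ.toFun_empty]
  · have hmem := ha hpos p hp
    by_cases hpK : p ∈ K
    · rw [inter_cell_of_mem (fun q => phiSet φ q.out) hp hpK, funF_apply,
        indicator_of_mem (hmem.2 hpK), Pi.one_apply, mul_one]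
    · rw [inter_cell_of_notMem (fun q => phiSet φ q.out) hp hpK, funF_apply,
        indicator_of_notMem (mt hmem.1 hpK), mul_zero, μ.toFun_empty]

theorem exists_mem_convexHull_eqOn_funMu (μ : KeislerMeasure U φ) (hfs : FinSat φ M μ)
    (J : Finset (TypeSpace M ny)) :
    ∃ g ∈ convexHull ℝ (FamilyF φ M), EqOn g (FunMu φ M μ) J := by
  classical
  set C := cell (fun p : TypeSpace M ny => phiSet φ p.out) J
  have hC : ∀ K, InPhiAlg φ (C K) := .cell (fun q => q.out) J
  obtain ⟨a₀, -⟩ := hfs univ .univ (by simp [μ.total])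
  have hwit : ∀ K, ∃ a : Fin nx → M, 0 < μ.toFun (C K) → (fun i => (a i : U)) ∈ C K := by
    intro K
    by_cases hK : 0 < μ.toFun (C K)
    · obtain ⟨a, ha⟩ := hfs _ (hC K) hK
      exact ⟨a, fun _ => ha⟩
    · exact ⟨a₀, fun h => absurd h hK⟩
  choose a ha using hwit
  refine ⟨∑ K ∈ J.powerset, μ.toFun (C K) • FunF φ M (a K),
    (convex_convexHull ℝ _).sum_mem (fun K _ => μ.nonneg _ (hC K)) ?_
      fun K _ => subset_convexHull ℝ _ ⟨a K, rfl⟩, fun p hp => ?_⟩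
  · simpa [μ.total] using μ.sum_toFun_inter_cell (fun p => p.out) J .univ
  · simp only [Finset.sum_apply, Pi.smul_apply, smul_eq_mul]
    rw [Finset.sum_congr rfl fun K _ => toFun_cell_mul_funF φ M hp (ha K)]
    exact μ.sum_toFun_inter_cell _ J (.basic _)

end FiniteSatisfiability

theorem stmt_10_general
    {L : FirstOrder.Language.{0, 0}}
    {U : Type} [L.Structure U]
    (M : L.ElementarySubstructure U)
    {nx ny : ℕ} (φ : L.Formula (Fin nx ⊕ Fin ny))    (μ : KeislerMeasure U φ)
    (hfs : FinSat φ M μ) :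
    FunMu φ M μ ∈ closure (ratConv (FamilyF φ M)) :=
  closure_minimal convexHull_subset_closure_ratConv isClosed_closure <|
    mem_closure_of_forall_finset_exists_eqOn (exists_mem_convexHull_eqOn_funMu φ M μ hfs)

/-- **Proposition 4.7.** If `μ ∈ 𝔐_φ(U)` is finitely satisfiable over `M`, then `F_μ^φ`
lies in the closure of `conv_ℚ(𝔽_M^φ)` in `ℝ^{S_y(M)}` with the product topology. -/
theorem stmt_10
    {L : FirstOrder.Language.{0, 0}} (T : L.Theory) (hT : T.IsComplete)
    (hL : L.card ≤ Cardinal.aleph0)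
    {U : Type} [L.Structure U] [Nonempty U] (hUT : T.Model U)
    (κ : Cardinal.{0}) (hκ : Cardinal.aleph0 < κ) (hreg : κ.IsRegular)
    (hsat : IsSaturated L U κ) (hhom : IsStronglyHomogeneous L U κ)
    (M : L.ElementarySubstructure U) (hM : #M < κ)
    {nx ny : ℕ} (φ : L.Formula (Fin nx ⊕ Fin ny))    (μ : KeislerMeasure U φ)
    (hfs : FinSat φ M μ) :
    FunMu φ M μ ∈ closure (ratConv (FamilyF φ M)) :=
  stmt_10_general M φ μ hfs
end
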